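/- arXiv:1707.07017 — 2 statements merged into one kernel-verified Lean document; each statement's English description precedes it below -/
import Mathlib

section
/- Let f : ℂ → ℂ be complex differentiable at every point of ℂ, let R be a rectangle, and let a lie in the interior of R. Then the contour integral of z ↦ f(z)/(z − a) over ∂R equals 2πi · f(a). -/
/-!
Split `f z / (z - a) = dslope f a z + f a / (z - a)`. The removable-singularity theorem makes
`dslope f a` entire, so its boundary integral vanishes by Cauchy–Goursat. The boundary integral of
`(z - a)⁻¹` is computed side by side with the principal logarithm: each side avoids the branch
cut of `log (z - a)` except the left one, where we use `log (-(z - a))` instead, and the two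
branches differ by `± π i` at the corners.
-/

open Complex Set intervalIntegral
open scoped Real Interval

/-- The contour integral of `g` over the counter-clockwise boundary of the rectangle
`{z : α ≤ Re z ≤ β, γ ≤ Im z ≤ δ}`. -/
noncomputable def rectBoundaryIntegral (g : ℂ → ℂ) (α β γ δ : ℝ) : ℂ :=
  (∫ x : ℝ in α..β, g (x + γ * Complex.I)) - (∫ x : ℝ in α..β, g (x + δ * Complex.I)) +
    Complex.I * (∫ y : ℝ in γ..δ, g (β + y * Complex.I)) -
    Complex.I * (∫ y : ℝ in γ..δ, g (α + y * Complex.I))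

namespace Complex

lemma log_neg_of_im_neg {w : ℂ} (hw : w.im < 0) : log (-w) = log w + π * I := by
  rw [log, log, norm_neg, arg_neg_eq_arg_add_pi_of_im_neg hw]
  push_cast
  ring

lemma log_neg_of_im_pos {w : ℂ} (hw : 0 < w.im) : log (-w) = log w - π * I := by
  rw [log, log, norm_neg, arg_neg_eq_arg_sub_pi_of_im_pos hw]
  push_cast
  ring

end Complex

lemma intervalIntegral.integral_deriv_div_eq_log_sub {p p' : ℝ → ℂ} {s t : ℝ}
    (hp : ∀ u ∈ [[s, t]], HasDerivAt p (p' u) u) (hp' : ContinuousOn p' [[s, t]])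
    (hslit : ∀ u ∈ [[s, t]], p u ∈ slitPlane) :
    ∫ u in s..t, p' u / p u = log (p t) - log (p s) := by
  refine integral_eq_sub_of_hasDerivAt (fun u hu => (hp u hu).clog_real (hslit u hu)) ?_
  have hpc : ContinuousOn p [[s, t]] := fun u hu => (hp u hu).continuousAt.continuousWithinAt
  exact (hp'.div hpc fun u hu => slitPlane_ne_zero (hslit u hu)).intervalIntegrable

section rectangle

variable {α β γ δ : ℝ}

def rectBoundary (α β γ δ : ℝ) : Set ℂ :=
  [[α, β]] ×ℂ {γ, δ} ∪ {α, β} ×ℂ [[γ, δ]]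

lemma notMem_rectBoundary {a : ℂ} (ha : a.re ∈ Ioo α β ∧ a.im ∈ Ioo γ δ) :
    a ∉ rectBoundary α β γ δ := by
  obtain ⟨⟨h₁, h₂⟩, h₃, h₄⟩ := ha
  simp only [rectBoundary, mem_union, mem_reProdIm, mem_insert_iff, mem_singleton_iff]
  rintro (⟨-, h | h⟩ | ⟨h | h, -⟩) <;> linarith

lemma ofReal_add_mul_I_mem_rectBoundary_of_horizontal {x c : ℝ} (hx : x ∈ [[α, β]])
    (hc : c ∈ ({γ, δ} : Set ℝ)) : (x : ℂ) + c * I ∈ rectBoundary α β γ δ :=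
  Or.inl (by simpa [mem_reProdIm] using ⟨hx, hc⟩)

lemma ofReal_add_mul_I_mem_rectBoundary_of_vertical {b y : ℝ} (hb : b ∈ ({α, β} : Set ℝ))
    (hy : y ∈ [[γ, δ]]) : (b : ℂ) + y * I ∈ rectBoundary α β γ δ :=
  Or.inr (by simpa [mem_reProdIm] using ⟨hb, hy⟩)

lemma rectBoundaryIntegral_congr {g₁ g₂ : ℂ → ℂ} (h : EqOn g₁ g₂ (rectBoundary α β γ δ)) :
    rectBoundaryIntegral g₁ α β γ δ = rectBoundaryIntegral g₂ α β γ δ := by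
  have hx (c : ℝ) (hc : c ∈ ({γ, δ} : Set ℝ)) :
      ∫ x : ℝ in α..β, g₁ (x + c * I) = ∫ x in α..β, g₂ (x + c * I) :=
    integral_congr fun x hx => h (ofReal_add_mul_I_mem_rectBoundary_of_horizontal hx hc)
  have hy (b : ℝ) (hb : b ∈ ({α, β} : Set ℝ)) :
      ∫ y : ℝ in γ..δ, g₁ (b + y * I) = ∫ y in γ..δ, g₂ (b + y * I) :=
    integral_congr fun y hy => h (ofReal_add_mul_I_mem_rectBoundary_of_vertical hb hy)
  simp only [rectBoundaryIntegral, hx γ (by simp), hx δ (by simp), hy α (by simp),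
    hy β (by simp)]

lemma rectBoundaryIntegral_add {g₁ g₂ : ℂ → ℂ} (h₁ : ContinuousOn g₁ (rectBoundary α β γ δ))
    (h₂ : ContinuousOn g₂ (rectBoundary α β γ δ)) :
    rectBoundaryIntegral (fun z => g₁ z + g₂ z) α β γ δ =
      rectBoundaryIntegral g₁ α β γ δ + rectBoundaryIntegral g₂ α β γ δ := by
  have hx {g : ℂ → ℂ} (hg : ContinuousOn g (rectBoundary α β γ δ)) (c : ℝ)
      (hc : c ∈ ({γ, δ} : Set ℝ)) :
      IntervalIntegrable (fun x : ℝ => g (x + c * I)) MeasureTheory.volume α β :=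
    (hg.comp (by fun_prop) fun _ hx =>
      ofReal_add_mul_I_mem_rectBoundary_of_horizontal hx hc).intervalIntegrable
  have hy {g : ℂ → ℂ} (hg : ContinuousOn g (rectBoundary α β γ δ)) (b : ℝ)
      (hb : b ∈ ({α, β} : Set ℝ)) :
      IntervalIntegrable (fun y : ℝ => g (b + y * I)) MeasureTheory.volume γ δ :=
    (hg.comp (by fun_prop) fun _ hy =>
      ofReal_add_mul_I_mem_rectBoundary_of_vertical hb hy).intervalIntegrable
  simp only [rectBoundaryIntegral]
  rw [integral_add (hx h₁ γ (by simp)) (hx h₂ γ (by simp)),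
    integral_add (hx h₁ δ (by simp)) (hx h₂ δ (by simp)),
    integral_add (hy h₁ α (by simp)) (hy h₂ α (by simp)),
    integral_add (hy h₁ β (by simp)) (hy h₂ β (by simp))]
  ring

lemma rectBoundaryIntegral_const_mul (c : ℂ) (g : ℂ → ℂ) :
    rectBoundaryIntegral (fun z => c * g z) α β γ δ = c * rectBoundaryIntegral g α β γ δ := by
  simp only [rectBoundaryIntegral, integral_const_mul]
  ring

lemma rectBoundaryIntegral_eq_zero_of_differentiableOn {g : ℂ → ℂ}
    (hg : DifferentiableOn ℂ g ([[α, β]] ×ℂ [[γ, δ]])) : rectBoundaryIntegral g α β γ δ = 0 := by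
  simpa [rectBoundaryIntegral] using
    integral_boundary_rect_eq_zero_of_differentiableOn g ⟨α, γ⟩ ⟨β, δ⟩ hg

lemma integral_inv_sub_horizontal (a : ℂ) {c : ℝ} (hc : c ≠ a.im) :
    ∫ x : ℝ in α..β, ((x : ℂ) + c * I - a)⁻¹ = log (β + c * I - a) - log (α + c * I - a) := by
  have hslit (x : ℝ) : (x : ℂ) + c * I - a ∈ slitPlane :=
    Or.inr (by simpa [sub_eq_zero] using hc)
  simpa using integral_deriv_div_eq_log_sub (p := fun x : ℝ => (x : ℂ) + c * I - a)
    (fun x _ => ((hasDerivAt_id (x : ℂ)).comp_ofReal.add_const _).sub_const _)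
    continuousOn_const fun x _ => hslit x

lemma integral_inv_sub_vertical_of_re_lt {a : ℂ} {b : ℝ} (hb : a.re < b) :
    I * ∫ y : ℝ in γ..δ, ((b : ℂ) + y * I - a)⁻¹ =
      log (b + δ * I - a) - log (b + γ * I - a) := by
  have hslit (y : ℝ) : (b : ℂ) + y * I - a ∈ slitPlane := Or.inl (by simpa using hb)
  rw [← integral_const_mul]
  simpa [div_eq_mul_inv, mul_comm] using integral_deriv_div_eq_log_sub
    (p := fun y : ℝ => (b : ℂ) + y * I - a)
    (fun y _ => (((hasDerivAt_id (y : ℂ)).comp_ofReal.mul_const I).const_add _).sub_const _)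
    continuousOn_const fun y _ => hslit y

lemma integral_inv_sub_vertical_of_lt_re {a : ℂ} {b : ℝ} (hb : b < a.re) :
    I * ∫ y : ℝ in γ..δ, ((b : ℂ) + y * I - a)⁻¹ =
      log (-(b + δ * I - a)) - log (-(b + γ * I - a)) := by
  have hslit (y : ℝ) : -((b : ℂ) + y * I - a) ∈ slitPlane := Or.inl (by simpa using hb)
  have h := integral_deriv_div_eq_log_sub (s := γ) (t := δ)
    (p := fun y : ℝ => -((b : ℂ) + y * I - a)) (p' := fun _ => -I)
    (fun y _ => by
      simpa [Pi.neg_def] using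
        ((((hasDerivAt_id (y : ℂ)).comp_ofReal.mul_const I).const_add (b : ℂ)).sub_const a).neg)
    continuousOn_const fun y _ => hslit y
  simp only [neg_div_neg_eq] at h
  rw [← integral_const_mul, ← h]
  simp only [div_eq_mul_inv]

lemma rectBoundaryIntegral_inv_sub {a : ℂ} (ha : a.re ∈ Ioo α β ∧ a.im ∈ Ioo γ δ) :
    rectBoundaryIntegral (fun z => (z - a)⁻¹) α β γ δ = 2 * π * I := by
  obtain ⟨⟨h₁, h₂⟩, h₃, h₄⟩ := ha
  rw [rectBoundaryIntegral, integral_inv_sub_horizontal a h₃.ne,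
    integral_inv_sub_horizontal a h₄.ne', integral_inv_sub_vertical_of_re_lt h₂,
    integral_inv_sub_vertical_of_lt_re h₁,
    log_neg_of_im_pos (by simpa using h₄), log_neg_of_im_neg (by simpa using h₃)]
  ring

end rectangle

theorem cauchy_integral_formula_rect_general (f : ℂ → ℂ) (hf : ∀ z : ℂ, DifferentiableAt ℂ f z)
    (α β γ δ : ℝ) (a : ℂ)
    (ha : a.re ∈ Set.Ioo α β ∧ a.im ∈ Set.Ioo γ δ) :
    rectBoundaryIntegral (fun z => f z / (z - a)) α β γ δ =
      2 * Real.pi * Complex.I * f a := by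
  have hsub : ∀ z ∈ rectBoundary α β γ δ, z - a ≠ 0 := fun z hz =>
    sub_ne_zero.2 (ne_of_mem_of_not_mem hz (notMem_rectBoundary ha))
  have hsplit : EqOn (fun z => f z / (z - a)) (fun z => dslope f a z + f a * (z - a)⁻¹)
      (rectBoundary α β γ δ) := fun z hz => by
    dsimp only
    rw [dslope_of_ne f (sub_ne_zero.1 (hsub z hz)), slope_def_field]
    field_simp [hsub z hz]
    ring
  have hdslope : DifferentiableOn ℂ (dslope f a) univ :=
    (differentiableOn_dslope Filter.univ_mem).2 fun z _ => (hf z).differentiableWithinAt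
  have hinv : ContinuousOn (fun z => f a * (z - a)⁻¹) (rectBoundary α β γ δ) :=
    continuousOn_const.mul ((continuousOn_id.sub continuousOn_const).inv₀ hsub)
  rw [rectBoundaryIntegral_congr hsplit,
    rectBoundaryIntegral_add (hdslope.continuousOn.mono (subset_univ _)) hinv,
    rectBoundaryIntegral_const_mul, rectBoundaryIntegral_eq_zero_of_differentiableOn
      (hdslope.mono (subset_univ _)), rectBoundaryIntegral_inv_sub ha]
  ring

theorem cauchy_integral_formula_rect (f : ℂ → ℂ) (hf : ∀ z : ℂ, DifferentiableAt ℂ f z)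
    (α β γ δ : ℝ) (hαβ : α < β) (hγδ : γ < δ) (a : ℂ)
    (ha : a.re ∈ Set.Ioo α β ∧ a.im ∈ Set.Ioo γ δ) :
    rectBoundaryIntegral (fun z => f z / (z - a)) α β γ δ =
      2 * Real.pi * Complex.I * f a :=
  cauchy_integral_formula_rect_general f hf α β γ δ a ha
end

section
/- Let f : ℂ → ℂ be complex differentiable at every point of ℂ, let R be a rectangle, and let a lie in the interior of R. Then the contour integral of z ↦ f(z)/(z − a)² over ∂R equals 2πi · f'(a), where f' is the complex derivative of f. -/
open Complex Set
open scoped Interval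

theorem integral_horizontal_eq_sub {g G : ℂ → ℂ} {α β c : ℝ}
    (hG : ∀ x ∈ [[α, β]], HasDerivAt G (g (x + c * I)) (x + c * I))
    (hg : IntervalIntegrable (fun x : ℝ => g (x + c * I)) MeasureTheory.volume α β) :
    ∫ x : ℝ in α..β, g (x + c * I) = G (β + c * I) - G (α + c * I) :=
  intervalIntegral.integral_eq_sub_of_hasDerivAt
    (fun x hx => ((hG x hx).comp_add_const (x : ℂ) (c * I)).comp_ofReal) hg

theorem I_mul_integral_vertical_eq_sub {g G : ℂ → ℂ} {γ δ c : ℝ}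
    (hG : ∀ y ∈ [[γ, δ]], HasDerivAt G (g (c + y * I)) (c + y * I))
    (hg : IntervalIntegrable (fun y : ℝ => g (c + y * I)) MeasureTheory.volume γ δ) :
    I * ∫ y : ℝ in γ..δ, g (c + y * I) = G (c + δ * I) - G (c + γ * I) := by
  rw [← intervalIntegral.integral_const_mul]
  refine intervalIntegral.integral_eq_sub_of_hasDerivAt (f := fun y : ℝ => G (c + y * I))
    (fun y hy => ?_) (hg.const_mul I)
  have hline : HasDerivAt (fun w : ℂ => (c : ℂ) + w * I) I y := by
    simpa using ((hasDerivAt_id (y : ℂ)).mul_const I).const_add (c : ℂ)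
  simpa [mul_comm] using ((hG y hy).comp (y : ℂ) hline).comp_ofReal

theorem rectBoundaryIntegral_eq_of_slitPlane_primitives {g G M : ℂ → ℂ} {a : ℂ} {α β γ δ : ℝ}
    (hα : α < a.re) (hβ : a.re < β) (hγ : γ < a.im) (hδ : a.im < δ) (hg : ContinuousOn g {a}ᶜ)
    (hG : ∀ z, z - a ∈ slitPlane → HasDerivAt G (g z) z)
    (hM : ∀ z, a - z ∈ slitPlane → HasDerivAt M (g z) z) :
    rectBoundaryIntegral g α β γ δ =
      (G (α + δ * I) - M (α + δ * I)) - (G (α + γ * I) - M (α + γ * I)) := by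
  have horizontal {c : ℝ} (hc : c ≠ a.im) : Continuous fun x : ℝ => g (x + c * I) :=
    hg.comp_continuous (by fun_prop) fun x hx => hc (by simpa using congrArg im hx)
  have vertical {c : ℝ} (hc : c ≠ a.re) : Continuous fun y : ℝ => g (c + y * I) :=
    hg.comp_continuous (by fun_prop) fun y hy => hc (by simpa using congrArg re hy)
  have bottom := integral_horizontal_eq_sub (G := G) (α := α) (β := β)
    (fun x _ => hG _ (mem_slitPlane_iff.2 (.inr (by simpa using sub_ne_zero.2 hγ.ne))))
    ((horizontal hγ.ne).intervalIntegrable _ _)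
  have top := integral_horizontal_eq_sub (G := G) (α := α) (β := β)
    (fun x _ => hG _ (mem_slitPlane_iff.2 (.inr (by simpa using sub_ne_zero.2 hδ.ne'))))
    ((horizontal hδ.ne').intervalIntegrable _ _)
  have right := I_mul_integral_vertical_eq_sub (G := G) (γ := γ) (δ := δ)
    (fun y _ => hG _ (mem_slitPlane_iff.2 (.inl (by simpa using hβ))))
    ((vertical hβ.ne').intervalIntegrable _ _)
  have left := I_mul_integral_vertical_eq_sub (G := M) (γ := γ) (δ := δ)
    (fun y _ => hM _ (mem_slitPlane_iff.2 (.inl (by simpa using hα))))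
    ((vertical hα.ne).intervalIntegrable _ _)
  rw [rectBoundaryIntegral, bottom, top, right, left]
  ring

theorem Complex.differentiable_dslope {E : Type*} [NormedAddCommGroup E] [NormedSpace ℂ E]
    [CompleteSpace E] {f : ℂ → E} {c : ℂ} :
    Differentiable ℂ (dslope f c) ↔ Differentiable ℂ f := by
  simpa only [differentiableOn_univ] using differentiableOn_dslope (f := f) Filter.univ_mem

theorem Complex.log_sub_log_neg_of_im_pos {w : ℂ} (hw : 0 < w.im) :
    log w - log (-w) = Real.pi * I := by
  apply Complex.ext <;> simp [log_re, log_im, arg_neg_eq_arg_sub_pi_of_im_pos hw]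

theorem Complex.log_sub_log_neg_of_im_neg {w : ℂ} (hw : w.im < 0) :
    log w - log (-w) = -(Real.pi * I) := by
  apply Complex.ext <;> simp [log_re, log_im, arg_neg_eq_arg_add_pi_of_im_neg hw]

theorem hasDerivAt_log_const_sub {a z : ℂ} (hz : a - z ∈ slitPlane) :
    HasDerivAt (fun w => log (a - w)) (z - a)⁻¹ z := by
  refine ((Complex.hasDerivAt_log hz).comp_const_sub a z).congr_deriv ?_
  rw [← neg_sub z a, inv_neg, neg_neg]

theorem hasDerivAt_div_sub_sq_of_primitive_dslope_dslope {f H L : ℂ → ℂ} {a z : ℂ} (hz : z ≠ a)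
    (hH : HasDerivAt H (dslope (dslope f a) a z) z) (hL : HasDerivAt L (z - a)⁻¹ z) :
    HasDerivAt (fun w => H w - f a * (w - a)⁻¹ + deriv f a * L w) (f z / (z - a) ^ 2) z := by
  have hza : z - a ≠ 0 := sub_ne_zero.2 hz
  have hinv := ((hasDerivAt_id' z).sub_const a).inv hza
  refine ((hH.sub (hinv.const_mul (f a))).add (hL.const_mul (deriv f a))).congr_deriv ?_
  rw [dslope_of_ne _ hz, slope_def_field, dslope_of_ne _ hz, slope_def_field, dslope_same]
  field_simp
  ring

theorem cauchy_integral_formula_deriv_rect_general (f : ℂ → ℂ) (hf : ∀ z : ℂ, DifferentiableAt ℂ f z)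
    (α β γ δ : ℝ) (a : ℂ)
    (ha : a.re ∈ Set.Ioo α β ∧ a.im ∈ Set.Ioo γ δ) :
    rectBoundaryIntegral (fun z => f z / (z - a) ^ 2) α β γ δ =
      2 * Real.pi * Complex.I * deriv f a := by
  obtain ⟨⟨hα, hβ⟩, hγ, hδ⟩ := ha
  obtain ⟨H, hH⟩ := (differentiable_dslope.2 (differentiable_dslope.2 hf)).isExactOn_univ
  have hcont : ContinuousOn (fun z => f z / (z - a) ^ 2) {a}ᶜ :=
    (Differentiable.continuous hf).continuousOn.div (by fun_prop)
      fun z hz => pow_ne_zero 2 (sub_ne_zero.2 hz)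
  rw [rectBoundaryIntegral_eq_of_slitPlane_primitives hα hβ hγ hδ hcont
    (fun z hz => hasDerivAt_div_sub_sq_of_primitive_dslope_dslope
      (sub_ne_zero.1 (slitPlane_ne_zero hz)) (hH z trivial)
      ((hasDerivAt_log hz).comp_sub_const z a))
    (fun z hz => hasDerivAt_div_sub_sq_of_primitive_dslope_dslope
      (sub_ne_zero.1 (slitPlane_ne_zero hz)).symm (hH z trivial) (hasDerivAt_log_const_sub hz))]
  simp only [add_sub_add_left_eq_sub, ← mul_sub, ← neg_sub _ a]
  rw [log_sub_log_neg_of_im_pos (by simpa using hδ),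
    log_sub_log_neg_of_im_neg (by simpa using hγ)]
  ring

theorem cauchy_integral_formula_deriv_rect (f : ℂ → ℂ) (hf : ∀ z : ℂ, DifferentiableAt ℂ f z)
    (α β γ δ : ℝ) (hαβ : α < β) (hγδ : γ < δ) (a : ℂ)
    (ha : a.re ∈ Set.Ioo α β ∧ a.im ∈ Set.Ioo γ δ) :
    rectBoundaryIntegral (fun z => f z / (z - a) ^ 2) α β γ δ =
      2 * Real.pi * Complex.I * deriv f a :=
  cauchy_integral_formula_deriv_rect_general f hf α β γ δ a ha
end
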